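/- arXiv:2309.06278 — 7 statements merged into one kernel-verified Lean document; each statement's English description precedes it below -/
import Mathlib

section
/- The function g has a unique root, namely ρ*: one has g(ρ*) = 0, and if g(ρ) = 0 for some real ρ then ρ = ρ*. -/
/-- The Dinkelbach function `g ρ = min_{X ∈ S} (f1 X - ρ * f2 X)` has a unique root,
namely `ρ* = min_{X ∈ S} f1 X / f2 X`: one has `g ρ* = 0`, and any root of `g` equals `ρ*`. -/
theorem dinkelbach_unique_root {M Q : ℕ} (hM : 0 < M) (hQ : 0 < Q)
    (S : Set (Matrix (Fin M) (Fin Q) ℝ)) (hSne : S.Nonempty) (hScomp : IsCompact S)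
    (f1 f2 : Matrix (Fin M) (Fin Q) ℝ → ℝ)
    (hf1 : Continuous f1) (hf2 : Continuous f2)
    (hf2pos : ∀ X ∈ S, 0 < f2 X) :
    sInf ((fun X => f1 X - (sInf ((fun Y => f1 Y / f2 Y) '' S)) * f2 X) '' S) = 0 ∧
    ∀ ρ : ℝ, sInf ((fun X => f1 X - ρ * f2 X) '' S) = 0 →
      ρ = sInf ((fun Y => f1 Y / f2 Y) '' S) := by
  set T : Set ℝ := (fun Y => f1 Y / f2 Y) '' S with hT
  have hTcomp : IsCompact T := hScomp.image_of_continuousOn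
    (hf1.continuousOn.div hf2.continuousOn (fun X hX => (hf2pos X hX).ne'))
  have hTne : T.Nonempty := hSne.image _
  have hTbdd : BddBelow T := hTcomp.bddBelow
  set ρs : ℝ := sInf T with hρs
  have hρsmem : ρs ∈ T := hTcomp.sInf_mem hTne
  -- For each ρ, facts about U ρ
  have hUcomp : ∀ ρ : ℝ, IsCompact ((fun X => f1 X - ρ * f2 X) '' S) := fun ρ =>
    hScomp.image (by continuity)
  have hUne : ∀ ρ : ℝ, ((fun X => f1 X - ρ * f2 X) '' S).Nonempty := fun ρ => hSne.image _
  have key : ∀ ρ : ℝ, ∀ X ∈ S, (0 ≤ f1 X - ρ * f2 X ↔ ρ ≤ f1 X / f2 X) := by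
    intro ρ X hX
    rw [le_div_iff₀ (hf2pos X hX), sub_nonneg]
  constructor
  · obtain ⟨X0, hX0S, hX0⟩ := hρsmem
    apply le_antisymm
    · have h0 : f1 X0 - ρs * f2 X0 = 0 := by
        have := (div_eq_iff (hf2pos X0 hX0S).ne').mp hX0
        linarith
      exact h0 ▸ csInf_le (hUcomp ρs).bddBelow ⟨X0, hX0S, rfl⟩
    · refine le_csInf (hUne ρs) ?_
      rintro b ⟨X, hXS, rfl⟩
      exact (key ρs X hXS).2 (csInf_le hTbdd ⟨X, hXS, rfl⟩)
  · intro ρ hρ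
    apply le_antisymm
    · refine le_csInf hTne ?_
      rintro b ⟨X, hXS, rfl⟩
      refine (key ρ X hXS).1 ?_
      calc (0 : ℝ) = sInf ((fun X => f1 X - ρ * f2 X) '' S) := hρ.symm
        _ ≤ f1 X - ρ * f2 X := csInf_le (hUcomp ρ).bddBelow ⟨X, hXS, rfl⟩
    · have hmem := (hUcomp ρ).sInf_mem (hUne ρ)
      rw [hρ] at hmem
      obtain ⟨X1, hX1S, hX1⟩ := hmem
      have hρeq : ρ = f1 X1 / f2 X1 := by
        simp only at hX1
        rw [eq_div_iff (hf2pos X1 hX1S).ne']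
        linarith
      exact hρeq ▸ csInf_le hTbdd ⟨X1, hX1S, rfl⟩
end

section
/- The function g : ℝ → ℝ defined by g(ρ) = min_{X∈S} (f1(X) − ρ·f2(X)) is strictly decreasing: for all real ρ1 < ρ2 one has g(ρ2) < g(ρ1). -/
/-- The Dinkelbach function `g ρ = min_{X ∈ S} (f1 X - ρ * f2 X)` is strictly decreasing. -/
theorem dinkelbach_g_strictAnti {M Q : ℕ} (hM : 0 < M) (hQ : 0 < Q)
    (S : Set (Matrix (Fin M) (Fin Q) ℝ)) (hSne : S.Nonempty) (hScomp : IsCompact S)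
    (f1 f2 : Matrix (Fin M) (Fin Q) ℝ → ℝ)
    (hf1 : Continuous f1) (hf2 : Continuous f2)
    (hf2pos : ∀ X ∈ S, 0 < f2 X) :
    ∀ ρ1 ρ2 : ℝ, ρ1 < ρ2 →
      sInf ((fun X => f1 X - ρ2 * f2 X) '' S) < sInf ((fun X => f1 X - ρ1 * f2 X) '' S) := by
  intro ρ1 ρ2 hρ
  obtain ⟨X0, hX0S, hmin⟩ := hScomp.exists_isMinOn hSne
    ((hf1.sub (continuous_const.mul hf2)).continuousOn :
      ContinuousOn (fun X => f1 X - ρ1 * f2 X) S)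
  have h1 : sInf ((fun X => f1 X - ρ1 * f2 X) '' S) = f1 X0 - ρ1 * f2 X0 := by
    apply le_antisymm
    · exact csInf_le (hScomp.image (hf1.sub (continuous_const.mul hf2))).bddBelow
        ⟨X0, hX0S, rfl⟩
    · exact le_csInf (hSne.image _) (by rintro y ⟨X, hXS, rfl⟩; exact hmin hXS)
  have h2 : sInf ((fun X => f1 X - ρ2 * f2 X) '' S) ≤ f1 X0 - ρ2 * f2 X0 :=
    csInf_le (hScomp.image (hf1.sub (continuous_const.mul hf2))).bddBelow ⟨X0, hX0S, rfl⟩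
  have h3 : f1 X0 - ρ2 * f2 X0 < f1 X0 - ρ1 * f2 X0 := by
    have := hf2pos X0 hX0S
    nlinarith
  rw [h1]
  exact h2.trans_lt h3
end

section
/- Along a Dinkelbach sequence, the values ρ^i = r(X^i) form a non-increasing sequence of real numbers, bounded below by ρ*, and hence convergent. -/
/-! Since `f(X^i, ρ^i) = 0` and `X^{i+1}` minimizes `f(·, ρ^i)`, we get `f(X^{i+1}, ρ^i) ≤ 0`,
which for `f2 > 0` reads `ρ^{i+1} ≤ ρ^i`. The ratio is continuous on the compact set `S`, hence
bounded below there, and a bounded antitone sequence converges. -/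

open Set

theorem div_le_div_of_sub_mul_le_sub_mul {a b c d : ℝ} (hb : b ≠ 0) (hd : 0 < d)
    (h : c - a / b * d ≤ a - a / b * b) : c / d ≤ a / b := by
  rw [div_mul_cancel₀ a hb, sub_self] at h
  rw [div_le_iff₀ hd]
  linarith

theorem antitone_ratio_of_dinkelbach_step {α : Type*} {S : Set α} {f1 f2 : α → ℝ}
    (hf2pos : ∀ x ∈ S, 0 < f2 x) {X : ℕ → α} (hmem : ∀ i, X i ∈ S)
    (hstep : ∀ i, f1 (X (i + 1)) - f1 (X i) / f2 (X i) * f2 (X (i + 1)) ≤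
      f1 (X i) - f1 (X i) / f2 (X i) * f2 (X i)) :
    Antitone fun i => f1 (X i) / f2 (X i) :=
  antitone_nat_of_succ_le fun i =>
    div_le_div_of_sub_mul_le_sub_mul (hf2pos _ (hmem i)).ne' (hf2pos _ (hmem (i + 1))) (hstep i)

theorem dinkelbach_rho_monotone_convergent_general {M Q : ℕ}
    (S : Set (Matrix (Fin M) (Fin Q) ℝ)) (hScomp : IsCompact S)
    (f1 f2 : Matrix (Fin M) (Fin Q) ℝ → ℝ)
    (hf1 : Continuous f1) (hf2 : Continuous f2)
    (hf2pos : ∀ X ∈ S, 0 < f2 X)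
    (Xseq : ℕ → Matrix (Fin M) (Fin Q) ℝ)
    (hmem : ∀ i, Xseq i ∈ S)
    (hmin : ∀ i, ∀ X ∈ S,
      f1 (Xseq (i + 1)) - (f1 (Xseq i) / f2 (Xseq i)) * f2 (Xseq (i + 1)) ≤
        f1 X - (f1 (Xseq i) / f2 (Xseq i)) * f2 X) :
    Antitone (fun i => f1 (Xseq i) / f2 (Xseq i)) ∧
    (∀ i, sInf ((fun X => f1 X / f2 X) '' S) ≤ f1 (Xseq i) / f2 (Xseq i)) ∧
    ∃ l : ℝ, Filter.Tendsto (fun i => f1 (Xseq i) / f2 (Xseq i)) Filter.atTop (nhds l) := by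
  have hanti := antitone_ratio_of_dinkelbach_step hf2pos hmem fun i => hmin i _ (hmem i)
  have hbdd : BddBelow ((fun X => f1 X / f2 X) '' S) :=
    hScomp.bddBelow_image <| hf1.continuousOn.div hf2.continuousOn fun X hX => (hf2pos X hX).ne'
  have hrange : BddBelow (range fun i => f1 (Xseq i) / f2 (Xseq i)) :=
    hbdd.mono <| range_subset_iff.2 fun i => mem_image_of_mem _ (hmem i)
  exact ⟨hanti, fun i => csInf_le hbdd ⟨_, hmem i, rfl⟩, _, tendsto_atTop_ciInf hanti hrange⟩

/-- Along a Dinkelbach sequence, the values `ρ^i = f1 (X i) / f2 (X i)` form a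
non-increasing sequence, bounded below by `ρ* = min_{X ∈ S} f1 X / f2 X`, hence convergent. -/
theorem dinkelbach_rho_monotone_convergent {M Q : ℕ} (hM : 0 < M) (hQ : 0 < Q)
    (S : Set (Matrix (Fin M) (Fin Q) ℝ)) (hSne : S.Nonempty) (hScomp : IsCompact S)
    (f1 f2 : Matrix (Fin M) (Fin Q) ℝ → ℝ)
    (hf1 : Continuous f1) (hf2 : Continuous f2)
    (hf2pos : ∀ X ∈ S, 0 < f2 X)
    (Xseq : ℕ → Matrix (Fin M) (Fin Q) ℝ)
    (hmem : ∀ i, Xseq i ∈ S)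
    (hmin : ∀ i, ∀ X ∈ S,
      f1 (Xseq (i + 1)) - (f1 (Xseq i) / f2 (Xseq i)) * f2 (Xseq (i + 1)) ≤
        f1 X - (f1 (Xseq i) / f2 (Xseq i)) * f2 X) :
    Antitone (fun i => f1 (Xseq i) / f2 (Xseq i)) ∧
    (∀ i, sInf ((fun X => f1 X / f2 X) '' S) ≤ f1 (Xseq i) / f2 (Xseq i)) ∧
    ∃ l : ℝ, Filter.Tendsto (fun i => f1 (Xseq i) / f2 (Xseq i)) Filter.atTop (nhds l) :=
  dinkelbach_rho_monotone_convergent_general S hScomp f1 f2 hf1 hf2 hf2pos Xseq hmem hmin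
end

section
/- Along a Dinkelbach sequence, the sequence (ρ^i)_{i≥0} converges to the finite minimal value ρ* of the fractional program, i.e. lim_{i→∞} ρ^i = ρ* = min_{X∈S} f1(X)/f2(X). (Theorem 1, first part) -/
/-- Theorem 1, first part: along a Dinkelbach sequence, `ρ^i = f1 (X i) / f2 (X i)`
converges to the minimal value `ρ* = min_{X ∈ S} f1 X / f2 X` of the fractional program. -/
theorem dinkelbach_rho_tendsto_min {M Q : ℕ} (hM : 0 < M) (hQ : 0 < Q)
    (S : Set (Matrix (Fin M) (Fin Q) ℝ)) (hSne : S.Nonempty) (hScomp : IsCompact S)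
    (f1 f2 : Matrix (Fin M) (Fin Q) ℝ → ℝ)
    (hf1 : Continuous f1) (hf2 : Continuous f2)
    (hf2pos : ∀ X ∈ S, 0 < f2 X)
    (Xseq : ℕ → Matrix (Fin M) (Fin Q) ℝ)
    (hmem : ∀ i, Xseq i ∈ S)
    (hmin : ∀ i, ∀ X ∈ S,
      f1 (Xseq (i + 1)) - (f1 (Xseq i) / f2 (Xseq i)) * f2 (Xseq (i + 1)) ≤
        f1 X - (f1 (Xseq i) / f2 (Xseq i)) * f2 X) :
    Filter.Tendsto (fun i => f1 (Xseq i) / f2 (Xseq i)) Filter.atTop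
      (nhds (sInf ((fun X => f1 X / f2 X) '' S))) := by
  have hrcont : ContinuousOn (fun X => f1 X / f2 X) S :=
    (hf1.continuousOn).div (hf2.continuousOn) (fun X hX => (hf2pos X hX).ne')
  obtain ⟨Xstar, hXstar, hXstarmin⟩ := hScomp.exists_isMinOn hSne hrcont
  set ρs : ℝ := f1 Xstar / f2 Xstar with hρs
  have hsinf : sInf ((fun X => f1 X / f2 X) '' S) = ρs := by
    apply IsLeast.csInf_eq
    constructor
    · exact ⟨Xstar, hXstar, rfl⟩
    · rintro y ⟨X, hX, rfl⟩
      exact isMinOn_iff.mp hXstarmin X hX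
  obtain ⟨Xm, hXm, hXmmin⟩ := hScomp.exists_isMinOn hSne hf2.continuousOn
  obtain ⟨Xb, hXb, hXbmax⟩ := hScomp.exists_isMaxOn hSne hf2.continuousOn
  set m : ℝ := f2 Xm with hm'
  set B : ℝ := f2 Xb with hB'
  have hm : 0 < m := hf2pos Xm hXm
  have hB : 0 < B := hf2pos Xb hXb
  have hmB : m ≤ B := isMaxOn_iff.mp hXbmax Xm hXm
  set c : ℝ := m / B with hc'
  have hc0 : 0 < c := div_pos hm hB
  have hc1 : c ≤ 1 := (div_le_one hB).mpr hmB
  have hcB : c * B = m := div_mul_cancel₀ m hB.ne'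
  set ρ : ℕ → ℝ := fun i => f1 (Xseq i) / f2 (Xseq i) with hρ
  have hf1eq : ∀ i, f1 (Xseq i) = ρ i * f2 (Xseq i) := fun i =>
    (div_mul_cancel₀ (f1 (Xseq i)) (hf2pos _ (hmem i)).ne').symm
  have hρlb : ∀ i, ρs ≤ ρ i := fun i => isMinOn_iff.mp hXstarmin _ (hmem i)
  -- key geometric-decrease inequality
  have hkey : ∀ i, ρ (i + 1) - ρs ≤ (1 - c) * (ρ i - ρs) := by
    intro i
    have h1 := hmin i Xstar hXstar
    have h2 := hmin i (Xseq i) (hmem i)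
    -- rewrite f1 values
    rw [hf1eq (i + 1), hf1eq i] at h1 h2
    have hfstar : f1 Xstar = ρs * f2 Xstar :=
      (div_mul_cancel₀ (f1 Xstar) (hf2pos _ hXstar).ne').symm
    rw [hfstar] at h1
    rw [mul_div_assoc, div_self (hf2pos _ (hmem i)).ne', mul_one] at h1 h2
    have hmono : ρ (i + 1) ≤ ρ i := by
      have hpos := hf2pos _ (hmem (i + 1))
      nlinarith
    have hflb : m ≤ f2 Xstar := isMinOn_iff.mp hXmmin Xstar hXstar
    have hfub : f2 (Xseq (i + 1)) ≤ B := isMaxOn_iff.mp hXbmax _ (hmem (i + 1))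
    have hρsle : ρs ≤ ρ i := hρlb i
    -- (ρ_{i+1} - ρ_i) * B ≤ (ρs - ρ_i) * m
    have hmain : (ρ (i + 1) - ρ i) * B ≤ (ρs - ρ i) * m := by
      nlinarith [hf2pos _ (hmem (i + 1))]
    rw [← hcB] at hmain
    nlinarith
  have hgeo : ∀ i, ρ i - ρs ≤ (1 - c) ^ i * (ρ 0 - ρs) := by
    intro i
    induction i with
    | zero => simp
    | succ n ih =>
      calc ρ (n + 1) - ρs ≤ (1 - c) * (ρ n - ρs) := hkey n
        _ ≤ (1 - c) * ((1 - c) ^ n * (ρ 0 - ρs)) := by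
            apply mul_le_mul_of_nonneg_left ih; linarith
        _ = (1 - c) ^ (n + 1) * (ρ 0 - ρs) := by ring
  have hpow : Filter.Tendsto (fun i => (1 - c) ^ i) Filter.atTop (nhds 0) := by
    apply tendsto_pow_atTop_nhds_zero_of_lt_one <;> linarith
  have hupp : Filter.Tendsto (fun i => ρs + (1 - c) ^ i * (ρ 0 - ρs)) Filter.atTop (nhds ρs) := by
    have := ((hpow.mul_const (ρ 0 - ρs)).const_add ρs)
    simpa using this
  rw [hsinf]
  exact tendsto_of_tendsto_of_tendsto_of_le_of_le tendsto_const_nhds hupp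
    (fun i => hρlb i) (fun i => by linarith [hgeo i])
end

section
/- Along a Dinkelbach sequence, every cluster point X̄ of the sequence (X^i)_{i≥0} belongs to S and satisfies r(X̄) = ρ*, i.e. every convergent subsequence of (X^i) converges to an optimal solution of the fractional program. (Theorem 1, second part) -/
set_option maxHeartbeats 1000000 in
/-- Theorem 1, second part: along a Dinkelbach sequence, every cluster point `X̄` of the
sequence belongs to `S` and achieves the minimal value of the fractional objective,
i.e. every convergent subsequence converges to an optimal solution. -/
theorem dinkelbach_clusterPt_optimal {M Q : ℕ} (hM : 0 < M) (hQ : 0 < Q)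
    (S : Set (Matrix (Fin M) (Fin Q) ℝ)) (hSne : S.Nonempty) (hScomp : IsCompact S)
    (f1 f2 : Matrix (Fin M) (Fin Q) ℝ → ℝ)
    (hf1 : Continuous f1) (hf2 : Continuous f2)
    (hf2pos : ∀ X ∈ S, 0 < f2 X)
    (Xseq : ℕ → Matrix (Fin M) (Fin Q) ℝ)
    (hmem : ∀ i, Xseq i ∈ S)
    (hmin : ∀ i, ∀ X ∈ S,
      f1 (Xseq (i + 1)) - (f1 (Xseq i) / f2 (Xseq i)) * f2 (Xseq (i + 1)) ≤
        f1 X - (f1 (Xseq i) / f2 (Xseq i)) * f2 X)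
    (Xbar : Matrix (Fin M) (Fin Q) ℝ)
    (hcluster : MapClusterPt Xbar Filter.atTop Xseq) :
    Xbar ∈ S ∧ f1 Xbar / f2 Xbar = sInf ((fun X => f1 X / f2 X) '' S) := by
  have hXbarS : Xbar ∈ S := by
    have hle : Filter.map Xseq Filter.atTop ≤ Filter.principal S := by
      rw [Filter.le_principal_iff, Filter.mem_map]
      exact Filter.Eventually.of_forall hmem
    have : ClusterPt Xbar (Filter.principal S) := hcluster.clusterPt.mono hle
    rw [← hScomp.isClosed.closure_eq]
    exact mem_closure_iff_clusterPt.2 this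
  set r : Matrix (Fin M) (Fin Q) ℝ → ℝ := fun X => f1 X / f2 X with hr
  set ρ : ℕ → ℝ := fun i => r (Xseq i) with hρ
  -- key identity
  have hid : ∀ i, ρ i * f2 (Xseq i) = f1 (Xseq i) := fun i =>
    div_mul_cancel₀ _ (hf2pos _ (hmem i)).ne'
  -- ρ antitone
  have hanti : ∀ i, ρ (i + 1) ≤ ρ i := by
    intro i
    have h := hmin i (Xseq i) (hmem i)
    rw [hid i] at h
    have h2 : f1 (Xseq (i + 1)) ≤ ρ i * f2 (Xseq (i + 1)) := by linarith
    exact (div_le_iff₀ (hf2pos _ (hmem (i + 1)))).2 h2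
  have hantitone : Antitone ρ := antitone_nat_of_succ_le hanti
  -- r continuous on S
  have hrcont : ContinuousOn r S :=
    hf1.continuousOn.div hf2.continuousOn (fun x hx => (hf2pos x hx).ne')
  have himgcomp : IsCompact (r '' S) := hScomp.image_of_continuousOn hrcont
  have hbdd : BddBelow (r '' S) := himgcomp.bddBelow
  have hbddρ : BddBelow (Set.range ρ) := by
    obtain ⟨b, hb⟩ := hbdd
    exact ⟨b, by rintro _ ⟨i, rfl⟩; exact hb ⟨Xseq i, hmem i, rfl⟩⟩
  set L : ℝ := ⨅ i, ρ i with hL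
  have hρtendsto : Filter.Tendsto ρ Filter.atTop (nhds L) :=
    tendsto_atTop_ciInf hantitone hbddρ
  -- subsequence
  haveI : FirstCountableTopology (Matrix (Fin M) (Fin Q) ℝ) :=
    inferInstanceAs (FirstCountableTopology (Fin M → Fin Q → ℝ))
  obtain ⟨ψ, hψmono, hψtend⟩ := TopologicalSpace.FirstCountableTopology.tendsto_subseq hcluster
  have hψtop : Filter.Tendsto ψ Filter.atTop Filter.atTop :=
    hψmono.tendsto_atTop
  have hρψ : Filter.Tendsto (fun k => ρ (ψ k)) Filter.atTop (nhds L) :=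
    hρtendsto.comp hψtop
  have hρψr : Filter.Tendsto (fun k => ρ (ψ k)) Filter.atTop (nhds (r Xbar)) := by
    have : Filter.Tendsto (fun k => r (Xseq (ψ k))) Filter.atTop (nhds (r Xbar)) := by
      have hc : ContinuousAt r Xbar :=
        (hf1.continuousAt).div (hf2.continuousAt) (hf2pos _ hXbarS).ne'
      exact (hc.tendsto).comp hψtend
    exact this
  have hrL : r Xbar = L := tendsto_nhds_unique hρψr hρψ
  -- L is a lower bound of r '' S
  have hρψ1 : Filter.Tendsto (fun k => ρ (ψ k + 1)) Filter.atTop (nhds L) :=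
    hρtendsto.comp (Filter.tendsto_atTop_mono (fun k => Nat.le_succ (ψ k)) hψtop)
  obtain ⟨B, hB⟩ := (hScomp.image_of_continuousOn hf2.continuousOn).bddAbove
  have hlower : ∀ X ∈ S, L ≤ r X := by
    intro X hX
    have hkey : ∀ k, (ρ (ψ k + 1) - ρ (ψ k)) * B ≤ f1 X - ρ (ψ k) * f2 X := by
      intro k
      have h := hmin (ψ k) X hX
      have hidd := hid (ψ k + 1)
      have hf2pos' := hf2pos _ (hmem (ψ k + 1))
      have hf2B : f2 (Xseq (ψ k + 1)) ≤ B := hB ⟨_, hmem (ψ k + 1), rfl⟩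
      have hdiff : ρ (ψ k + 1) - ρ (ψ k) ≤ 0 := by linarith [hanti (ψ k)]
      have h1 : (ρ (ψ k + 1) - ρ (ψ k)) * B ≤
          (ρ (ψ k + 1) - ρ (ψ k)) * f2 (Xseq (ψ k + 1)) :=
        mul_le_mul_of_nonpos_left hf2B hdiff
      nlinarith
    have htendL : Filter.Tendsto (fun k => (ρ (ψ k + 1) - ρ (ψ k)) * B)
        Filter.atTop (nhds 0) := by
      have := (hρψ1.sub hρψ).mul_const B
      simpa using this
    have htendR : Filter.Tendsto (fun k => f1 X - ρ (ψ k) * f2 X)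
        Filter.atTop (nhds (f1 X - L * f2 X)) :=
      tendsto_const_nhds.sub (hρψ.mul_const _)
    have h0 : (0 : ℝ) ≤ f1 X - L * f2 X :=
      le_of_tendsto_of_tendsto' htendL htendR hkey
    rw [hr]
    exact (le_div_iff₀ (hf2pos X hX)).2 (by linarith)
  refine ⟨hXbarS, ?_⟩
  have h1 : sInf (r '' S) ≤ r Xbar := csInf_le hbdd ⟨Xbar, hXbarS, rfl⟩
  have h2 : L ≤ sInf (r '' S) := le_csInf (hSne.image r) (by rintro _ ⟨X, hX, rfl⟩; exact hlower X hX)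
  have : r Xbar = sInf (r '' S) := le_antisymm (hrL ▸ h2) h1
  exact this
end

section
/- If the fractional program has a unique solution X*, i.e. X* is the only point of S with r(X*) = ρ*, then every Dinkelbach sequence (X^i)_{i≥0} converges to X*. (Theorem 1, third part) -/
/-- Theorem 1, third part: if the fractional program has a unique solution `X*`,
then every Dinkelbach sequence converges to `X*`. -/
theorem dinkelbach_converges_to_unique_sol {M Q : ℕ} (hM : 0 < M) (hQ : 0 < Q)
    (S : Set (Matrix (Fin M) (Fin Q) ℝ)) (hSne : S.Nonempty) (hScomp : IsCompact S)
    (f1 f2 : Matrix (Fin M) (Fin Q) ℝ → ℝ)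
    (hf1 : Continuous f1) (hf2 : Continuous f2)
    (hf2pos : ∀ X ∈ S, 0 < f2 X)
    (Xstar : Matrix (Fin M) (Fin Q) ℝ) (hXstar : Xstar ∈ S)
    (hXstarVal : f1 Xstar / f2 Xstar = sInf ((fun X => f1 X / f2 X) '' S))
    (huniq : ∀ X ∈ S, f1 X / f2 X = sInf ((fun Y => f1 Y / f2 Y) '' S) → X = Xstar)
    (Xseq : ℕ → Matrix (Fin M) (Fin Q) ℝ)
    (hmem : ∀ i, Xseq i ∈ S)
    (hmin : ∀ i, ∀ X ∈ S,
      f1 (Xseq (i + 1)) - (f1 (Xseq i) / f2 (Xseq i)) * f2 (Xseq (i + 1)) ≤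
        f1 X - (f1 (Xseq i) / f2 (Xseq i)) * f2 X) :
    Filter.Tendsto Xseq Filter.atTop (nhds Xstar) := by
  set r : Matrix (Fin M) (Fin Q) ℝ → ℝ := fun X => f1 X / f2 X with hr
  set ρ : ℕ → ℝ := fun i => r (Xseq i) with hρdef
  set ρstar : ℝ := sInf (r '' S) with hρstar
  have hrcont : ContinuousOn r S :=
    hf1.continuousOn.div hf2.continuousOn (fun x hx => (hf2pos x hx).ne')
  have hbdd : BddBelow (r '' S) := (hScomp.image_of_continuousOn hrcont).bddBelow
  -- ρ* ≤ ρ i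
  have hlb : ∀ i, ρstar ≤ ρ i := fun i => csInf_le hbdd ⟨Xseq i, hmem i, rfl⟩
  -- ρ is antitone
  have hanti : Antitone ρ := by
    apply antitone_nat_of_succ_le
    intro i
    have h := hmin i (Xseq i) (hmem i)
    have h2i : ρ i * f2 (Xseq i) = f1 (Xseq i) := div_mul_cancel₀ _ (hf2pos _ (hmem i)).ne'
    have hpos := hf2pos _ (hmem (i + 1))
    rw [show ρ (i + 1) = f1 (Xseq (i + 1)) / f2 (Xseq (i + 1)) from rfl,
      div_le_iff₀ hpos]
    nlinarith [h, h2i]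
  have hρbdd : BddBelow (Set.range ρ) := ⟨ρstar, by rintro _ ⟨i, rfl⟩; exact hlb i⟩
  set l : ℝ := ⨅ i, ρ i with hl
  have hρtend : Filter.Tendsto ρ Filter.atTop (nhds l) :=
    tendsto_atTop_ciInf hanti hρbdd
  have hρstar_le_l : ρstar ≤ l := le_ciInf hlb
  -- key inequality with B an upper bound of f2 on S
  obtain ⟨B, hB⟩ := (hScomp.image hf2).bddAbove
  have hBub : ∀ X ∈ S, f2 X ≤ B := fun X hX => hB ⟨X, hX, rfl⟩
  have hkey : ∀ i, B * (ρ (i + 1) - ρ i) ≤ f2 Xstar * (ρstar - ρ i) := by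
    intro i
    have h := hmin i Xstar hXstar
    have h1 : ρ (i + 1) * f2 (Xseq (i + 1)) = f1 (Xseq (i + 1)) :=
      div_mul_cancel₀ _ (hf2pos _ (hmem (i + 1))).ne'
    have h2 : ρstar * f2 Xstar = f1 Xstar := by
      rw [← hXstarVal]; exact div_mul_cancel₀ _ (hf2pos _ hXstar).ne'
    have hle : f2 (Xseq (i + 1)) ≤ B := hBub _ (hmem (i + 1))
    have hnonpos : ρ (i + 1) - ρ i ≤ 0 := sub_nonpos.mpr (hanti (Nat.le_succ i))
    nlinarith [mul_le_mul_of_nonpos_right hle hnonpos]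
  -- take limits in hkey to get l ≤ ρstar
  have htendL : Filter.Tendsto (fun i => B * (ρ (i + 1) - ρ i)) Filter.atTop (nhds 0) := by
    have h1 : Filter.Tendsto (fun i => ρ (i + 1)) Filter.atTop (nhds l) :=
      hρtend.comp (Filter.tendsto_add_atTop_nat 1)
    have := (tendsto_const_nhds : Filter.Tendsto (fun _ : ℕ => B) Filter.atTop (nhds B)).mul
      (h1.sub hρtend)
    simpa using this
  have htendR : Filter.Tendsto (fun i => f2 Xstar * (ρstar - ρ i)) Filter.atTop
      (nhds (f2 Xstar * (ρstar - l))) :=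
    tendsto_const_nhds.mul (tendsto_const_nhds.sub hρtend)
  have h0 : (0 : ℝ) ≤ f2 Xstar * (ρstar - l) :=
    le_of_tendsto_of_tendsto' htendL htendR hkey
  have hleq : l = ρstar := by
    have hpos := hf2pos _ hXstar
    nlinarith
  have hρtends : Filter.Tendsto ρ Filter.atTop (nhds ρstar) := hleq ▸ hρtend
  -- conclude via subsequences
  haveI : FirstCountableTopology (Matrix (Fin M) (Fin Q) ℝ) :=
    inferInstanceAs (FirstCountableTopology (Fin M → Fin Q → ℝ))
  apply Filter.tendsto_of_subseq_tendsto
  intro ns hns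
  obtain ⟨L, hLS, φ, hφ, hφtend⟩ := hScomp.tendsto_subseq (fun k => hmem (ns k))
  refine ⟨φ, ?_⟩
  have hLX : L = Xstar := by
    apply huniq L hLS
    have htend1 : Filter.Tendsto (fun k => ρ (ns (φ k))) Filter.atTop (nhds ρstar) :=
      hρtends.comp (hns.comp hφ.tendsto_atTop)
    have htend2 : Filter.Tendsto (fun k => ρ (ns (φ k))) Filter.atTop (nhds (r L)) := by
      have hcont : Filter.Tendsto r (nhds L) (nhds (r L)) :=
        ((hf1.tendsto L).div (hf2.tendsto L) (hf2pos L hLS).ne')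
      exact hcont.comp hφtend
    exact tendsto_nhds_unique htend2 htend1
  exact hLX ▸ hφtend
end

section
/- Suppose S is a nonempty (not necessarily compact) set, r attains its minimum ρ* on S, and (X^i)_{i≥0} is a Dinkelbach sequence in S (each X^{i+1} minimizes f(·, ρ^i) over S, with ρ^i = r(X^i), such minimizers being assumed to exist). If sup_i f2(X^i) < ∞, then ρ^i → ρ*. -/
/-- Dinkelbach convergence without compactness: if `r = f1 / f2` attains its minimum `ρ*`
on the (not necessarily compact) nonempty set `S`, `(X i)` is a Dinkelbach sequence in `S`
(each `X (i+1)` minimizes `f(·, ρ^i)` over `S`), and `sup_i f2 (X i) < ∞`, then `ρ^i → ρ*`. -/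
theorem dinkelbach_noncompact_convergence {M Q : ℕ} (hM : 0 < M) (hQ : 0 < Q)
    (S : Set (Matrix (Fin M) (Fin Q) ℝ)) (hSne : S.Nonempty)
    (f1 f2 : Matrix (Fin M) (Fin Q) ℝ → ℝ)
    (hf1 : Continuous f1) (hf2 : Continuous f2)
    (hf2pos : ∀ X ∈ S, 0 < f2 X)
    (ρstar : ℝ) (hρstar : IsLeast ((fun X => f1 X / f2 X) '' S) ρstar)
    (Xseq : ℕ → Matrix (Fin M) (Fin Q) ℝ)
    (hmem : ∀ i, Xseq i ∈ S)
    (hmin : ∀ i, ∀ X ∈ S,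
      f1 (Xseq (i + 1)) - (f1 (Xseq i) / f2 (Xseq i)) * f2 (Xseq (i + 1)) ≤
        f1 X - (f1 (Xseq i) / f2 (Xseq i)) * f2 X)
    (hbdd : BddAbove (Set.range fun i => f2 (Xseq i))) :
    Filter.Tendsto (fun i => f1 (Xseq i) / f2 (Xseq i)) Filter.atTop (nhds ρstar) := by
  set ρ : ℕ → ℝ := fun i => f1 (Xseq i) / f2 (Xseq i) with hρdef
  have hf2p : ∀ i, 0 < f2 (Xseq i) := fun i => hf2pos _ (hmem i)
  have hcancel : ∀ i, ρ i * f2 (Xseq i) = f1 (Xseq i) := fun i =>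
    div_mul_cancel₀ _ (hf2p i).ne'
  have hlow : ∀ i, ρstar ≤ ρ i := fun i => hρstar.2 ⟨Xseq i, hmem i, rfl⟩
  have hanti : ∀ i, ρ (i + 1) ≤ ρ i := by
    intro i
    have h := hmin i (Xseq i) (hmem i)
    have h1 := hcancel i
    have h2 : f1 (Xseq (i + 1)) ≤ ρ i * f2 (Xseq (i + 1)) := by linarith
    have := (div_le_iff₀ (hf2p (i + 1))).mpr h2
    simpa [hρdef] using this
  have hbb : BddBelow (Set.range ρ) := ⟨ρstar, by rintro x ⟨i, rfl⟩; exact hlow i⟩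
  have hantiF : Antitone ρ := antitone_nat_of_succ_le hanti
  set L : ℝ := ⨅ i, ρ i with hLdef
  have htend : Filter.Tendsto ρ Filter.atTop (nhds L) :=
    tendsto_atTop_ciInf hantiF hbb
  have hLge : ρstar ≤ L := le_ciInf hlow
  have hLle : ∀ i, L ≤ ρ i := fun i => ciInf_le hbb i
  -- show L = ρstar
  have hLeq : L = ρstar := by
    by_contra hne
    have hLt : ρstar < L := lt_of_le_of_ne hLge (Ne.symm hne)
    obtain ⟨Xs, hXsS, hXsval⟩ := hρstar.1
    have hf2Xs : 0 < f2 Xs := hf2pos _ hXsS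
    have hf1Xs : f1 Xs = ρstar * f2 Xs := by
      field_simp at hXsval
      linarith [hXsval]
    obtain ⟨B, hB⟩ := hbdd
    have hBle : ∀ i, f2 (Xseq i) ≤ B := fun i => hB ⟨i, rfl⟩
    have hBpos : 0 < B := lt_of_lt_of_le (hf2p 0) (hBle 0)
    set c : ℝ := (L - ρstar) * f2 Xs with hcdef
    have hcpos : 0 < c := mul_pos (by linarith) hf2Xs
    -- each step decreases by at least c / B
    have hstep : ∀ i, ρ (i + 1) ≤ ρ i - c / B := by
      intro i
      have h := hmin i Xs hXsS
      have h1 := hcancel (i + 1)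
      -- (ρ (i+1) - ρ i) * f2 (Xseq (i+1)) ≤ (ρstar - ρ i) * f2 Xs
      have key : (ρ (i + 1) - ρ i) * f2 (Xseq (i + 1)) ≤ (ρstar - ρ i) * f2 Xs := by
        nlinarith [h, h1, hf1Xs]
      have h3 : (ρstar - ρ i) * f2 Xs ≤ (ρstar - L) * f2 Xs :=
        mul_le_mul_of_nonneg_right (by linarith [hLle i]) hf2Xs.le
      have h4 : (ρ (i + 1) - ρ i) * f2 (Xseq (i + 1)) ≤ -c := by
        rw [hcdef]; nlinarith
      have h5 : (ρ i - ρ (i + 1)) * B ≥ c := by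
        nlinarith [hanti i, hBle (i + 1), hf2p (i + 1)]
      have := (div_le_iff₀ hBpos).mpr h5
      linarith [(div_le_iff₀ hBpos).mpr h5]
    have hind : ∀ n : ℕ, ρ n ≤ ρ 0 - n * (c / B) := by
      intro n
      induction n with
      | zero => simp
      | succ k ih =>
        have := hstep k
        push_cast
        linarith
    obtain ⟨n, hn⟩ := exists_nat_gt ((ρ 0 - ρstar) / (c / B))
    have hcB : 0 < c / B := div_pos hcpos hBpos
    have : ρ 0 - ρstar < n * (c / B) := by
      have := (div_lt_iff₀ hcB).mp hn
      linarith
    linarith [hlow n, hind n]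
  rw [← hLeq]
  exact htend
end
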